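/- arXiv:1804.00565 — 8 statements merged into one kernel-verified Lean document; each statement's English description precedes it below -/
import Mathlib

section
/- Every PMV_f-algebra is a PMV-algebra. Precisely: let A be an MVW-rig (associative, commutative product) satisfying in addition a·b ≤ a ∧ b and a·(b ⊖ c) = a·b ⊖ a·c for all a, b, c ∈ A. Then for all a, b, c ∈ A: (1) a ⊙ b = 0 implies a·c ⊙ b·c = 0, and (2) a ⊙ b = 0 implies c·(a ⊕ b) = c·a ⊕ c·b. -/
/-- The data of an MV-algebra: a binary sum, a negation and a zero. -/
structure MVData (A : Type*) where
  add : A → A → A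
  neg : A → A
  zero : A

namespace MVData

variable {A : Type*} (m : MVData A)

/-- The top element `u = ¬0`. -/
def unit : A := m.neg m.zero

/-- Truncated difference `x ⊖ y = ¬(¬x ⊕ y)`. -/
def ominus (x y : A) : A := m.neg (m.add (m.neg x) y)

/-- The product `x ⊙ y = ¬(¬x ⊕ ¬y)`. -/
def odot (x y : A) : A := m.neg (m.add (m.neg x) (m.neg y))

/-- The MV order: `x ≤ y` iff `x ⊖ y = 0`. -/
def le (x y : A) : Prop := m.ominus x y = m.zero

/-- The lattice join `x ∨ y = (x ⊖ y) ⊕ y`. -/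
def sup (x y : A) : A := m.add (m.ominus x y) y

/-- The lattice meet `x ∧ y = ¬(¬x ∨ ¬y)`. -/
def inf (x y : A) : A := m.neg (m.sup (m.neg x) (m.neg y))

/-- The MV-algebra axioms: `(A, ⊕, 0)` is a commutative monoid and `¬` satisfies
`¬¬x = x`, `x ⊕ ¬0 = ¬0` and `¬(¬x ⊕ y) ⊕ y = ¬(¬y ⊕ x) ⊕ x`. -/
structure IsMV : Prop where
  add_assoc : ∀ x y z : A, m.add (m.add x y) z = m.add x (m.add y z)
  add_comm : ∀ x y : A, m.add x y = m.add y x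
  add_zero : ∀ x : A, m.add x m.zero = x
  neg_neg : ∀ x : A, m.neg (m.neg x) = x
  add_unit : ∀ x : A, m.add x (m.neg m.zero) = m.neg m.zero
  lukasiewicz : ∀ x y : A,
    m.add (m.neg (m.add (m.neg x) y)) y = m.add (m.neg (m.add (m.neg y) x)) x

end MVData

/-!
(1) `a·c ≤ a ≤ ¬b ≤ ¬(b·c)`, since `a ⊙ b = 0` means `a ≤ ¬b`.

(2) If `a ⊙ b = 0` then `(a ⊕ b) ⊖ b = a`, so `c·a = c·(a ⊕ b) ⊖ c·b` by distributivity over `⊖`.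
The same distributivity together with `c·0 = 0` makes `c·_` monotone, so `c·b ≤ c·(a ⊕ b)`,
and adding `c·b` back to a difference with a smaller element recovers `c·(a ⊕ b)`.
-/

namespace MVData.IsMV

variable {A : Type*} {m : MVData A}

lemma zero_add (hmv : m.IsMV) (x : A) : m.add m.zero x = x := by
  rw [hmv.add_comm, hmv.add_zero]

lemma neg_add_self (hmv : m.IsMV) (x : A) : m.add (m.neg x) x = m.neg m.zero := by
  have h := hmv.lukasiewicz x (m.neg m.zero)
  rw [hmv.add_unit, hmv.neg_neg, hmv.zero_add] at h
  exact h.symm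

lemma le_add_left (hmv : m.IsMV) (x w : A) : m.le x (m.add w x) := by
  show m.neg (m.add (m.neg x) (m.add w x)) = m.zero
  rw [hmv.add_comm w x, ← hmv.add_assoc, hmv.neg_add_self, hmv.add_comm, hmv.add_unit,
    hmv.neg_neg]

lemma sup_comm (hmv : m.IsMV) (x y : A) : m.sup x y = m.sup y x :=
  hmv.lukasiewicz x y

lemma ominus_add_of_le (hmv : m.IsMV) {x y : A} (h : m.le y x) :
    m.add (m.ominus x y) y = x := by
  change m.sup x y = x
  rw [hmv.sup_comm, sup, show m.ominus y x = m.zero from h, hmv.zero_add]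

lemma le_trans (hmv : m.IsMV) {x y z : A} (hxy : m.le x y) (hyz : m.le y z) : m.le x z := by
  have h := hmv.le_add_left x (m.add (m.ominus z y) (m.ominus y x))
  rwa [hmv.add_assoc, hmv.ominus_add_of_le hxy, hmv.ominus_add_of_le hyz] at h

lemma neg_le_neg (hmv : m.IsMV) {x y : A} (h : m.le x y) : m.le (m.neg y) (m.neg x) := by
  show m.neg (m.add (m.neg (m.neg y)) (m.neg x)) = m.zero
  rw [hmv.neg_neg, hmv.add_comm]
  exact h

lemma inf_le_left (hmv : m.IsMV) (x y : A) : m.le (m.inf x y) x := by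
  have h := hmv.neg_le_neg (hmv.le_add_left (m.neg x) (m.ominus (m.neg y) (m.neg x)))
  rw [inf, hmv.sup_comm]
  rwa [hmv.neg_neg] at h

lemma add_ominus_right_of_odot_eq_zero (hmv : m.IsMV) {a b : A} (hab : m.odot a b = m.zero) :
    m.ominus (m.add a b) b = a := by
  have key : m.add (m.neg (m.add a b)) b = m.neg a := by
    have h := hmv.lukasiewicz (m.neg a) b
    rw [hmv.neg_neg] at h
    rw [h, hmv.add_comm (m.neg b), show m.neg (m.add (m.neg a) (m.neg b)) = m.zero from hab,
      hmv.zero_add]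
  show m.neg (m.add (m.neg (m.add a b)) b) = a
  rw [key, hmv.neg_neg]

section Product

variable {mul : A → A → A}

lemma mul_le_left (hmv : m.IsMV) (mul_le_inf : ∀ a b : A, m.le (mul a b) (m.inf a b))
    (a b : A) : m.le (mul a b) a :=
  hmv.le_trans (mul_le_inf a b) (hmv.inf_le_left a b)

lemma mul_le_mul_left (mul_zero : ∀ a : A, mul a m.zero = m.zero)
    (mul_ominus : ∀ a b c : A, mul a (m.ominus b c) = m.ominus (mul a b) (mul a c))
    (c : A) {x y : A} (h : m.le x y) : m.le (mul c x) (mul c y) := by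
  show m.ominus (mul c x) (mul c y) = m.zero
  rw [← mul_ominus, show m.ominus x y = m.zero from h, mul_zero]

lemma odot_mul_eq_zero (hmv : m.IsMV) (mul_le_inf : ∀ a b : A, m.le (mul a b) (m.inf a b))
    {a b : A} (hab : m.odot a b = m.zero) (c : A) : m.odot (mul a c) (mul b c) = m.zero :=
  hmv.le_trans (hmv.le_trans (hmv.mul_le_left mul_le_inf a c) hab)
    (hmv.neg_le_neg (hmv.mul_le_left mul_le_inf b c))

lemma mul_add_of_odot_eq_zero (hmv : m.IsMV) (mul_zero : ∀ a : A, mul a m.zero = m.zero)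
    (mul_ominus : ∀ a b c : A, mul a (m.ominus b c) = m.ominus (mul a b) (mul a c))
    {a b : A} (hab : m.odot a b = m.zero) (c : A) :
    mul c (m.add a b) = m.add (mul c a) (mul c b) := by
  have hca : mul c a = m.ominus (mul c (m.add a b)) (mul c b) := by
    rw [← mul_ominus, hmv.add_ominus_right_of_odot_eq_zero hab]
  have hmono : m.le (mul c b) (mul c (m.add a b)) :=
    mul_le_mul_left mul_zero mul_ominus c (hmv.le_add_left b a)
  rw [hca, hmv.ominus_add_of_le hmono]

end Product

end MVData.IsMV

theorem pmvf_is_pmv_general {A : Type*} (m : MVData A) (hmv : m.IsMV)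
    (mul : A → A → A)
    (mul_zero : ∀ a : A, mul a m.zero = m.zero)
    (mul_le_inf : ∀ a b : A, m.le (mul a b) (m.inf a b))
    (mul_ominus : ∀ a b c : A, mul a (m.ominus b c) = m.ominus (mul a b) (mul a c)) :
    ∀ a b c : A,
      (m.odot a b = m.zero → m.odot (mul a c) (mul b c) = m.zero) ∧
      (m.odot a b = m.zero → mul c (m.add a b) = m.add (mul c a) (mul c b)) :=
  fun _ _ c =>
    ⟨fun hab => hmv.odot_mul_eq_zero mul_le_inf hab c,
      fun hab => hmv.mul_add_of_odot_eq_zero mul_zero mul_ominus hab c⟩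

/-- Every `PMV_f`-algebra is a `PMV`-algebra: if `A` is an MVW-rig
(associative commutative product, `a·0 = 0`, `a·(b ⊕ c) ≤ a·b ⊕ a·c`,
`a·b ⊖ a·c ≤ a·(b ⊖ c)`) which moreover satisfies `a·b ≤ a ∧ b` and
`a·(b ⊖ c) = a·b ⊖ a·c`, then `a ⊙ b = 0` implies both `a·c ⊙ b·c = 0` and
`c·(a ⊕ b) = c·a ⊕ c·b`. -/
theorem pmvf_is_pmv {A : Type*} (m : MVData A) (hmv : m.IsMV)
    (mul : A → A → A)
    (mul_assoc : ∀ a b c : A, mul (mul a b) c = mul a (mul b c))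
    (mul_comm : ∀ a b : A, mul a b = mul b a)
    (mul_zero : ∀ a : A, mul a m.zero = m.zero)
    (mul_add_le : ∀ a b c : A, m.le (mul a (m.add b c)) (m.add (mul a b) (mul a c)))
    (ominus_mul_le : ∀ a b c : A,
      m.le (m.ominus (mul a b) (mul a c)) (mul a (m.ominus b c)))
    (mul_le_inf : ∀ a b : A, m.le (mul a b) (m.inf a b))
    (mul_ominus : ∀ a b c : A, mul a (m.ominus b c) = m.ominus (mul a b) (mul a c)) :
    ∀ a b c : A,
      (m.odot a b = m.zero → m.odot (mul a c) (mul b c) = m.zero) ∧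
      (m.odot a b = m.zero → mul c (m.add a b) = m.add (mul c a) (mul c b)) :=
  pmvf_is_pmv_general m hmv mul mul_zero mul_le_inf mul_ominus
end

section
/- Let R be a commutative ring equipped with a lattice order such that addition is compatible with the order and products of nonnegative elements are nonnegative, and let u > 0 satisfy a·b ≤ a ⊓ b for all a, b ∈ [0, u]. Then the subring of R generated by the interval [0, u] equals {x ∈ R : ∃ n ∈ ℕ, |x| ≤ n•u}. In particular, if u is a strong unit of R, then R is generated as a ring by the segment [0, u]. -/
/-!
Since `u * u ≤ u`, the elements `x` with `|x| ≤ n • u` for some `n` form a subring: if `|x| ≤ a`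
and `|y| ≤ b`, then `2 • (a * b ∓ x * y)` is a sum of two products of nonnegative elements, and
in a lattice-ordered group `0 ≤ 2 • z` forces `0 ≤ z`. This subring contains `[0, u]`.
Conversely, every `0 ≤ y ≤ (n + 1) • u` is the sum of `y ⊓ u ∈ [0, u]` and
`y - y ⊓ u = 0 ⊔ (y - u) ≤ n • u`, so it lies in the additive closure of `[0, u]`, and
`x = x⁺ - x⁻` handles arbitrary `x`.
-/

open Set

section LatticeOrderedGroup

variable {G S : Type*} [AddCommGroup G] [Lattice G] [AddLeftMono G] [SetLike S G] {s : S} {u : G}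

lemma mem_of_nonneg_of_le_nsmul [AddSubmonoidClass S G] (hu : 0 ≤ u) (hs : Icc 0 u ⊆ s) :
    ∀ {n : ℕ} {y : G}, 0 ≤ y → y ≤ n • u → y ∈ s
  | 0, y, hy, hyn => by
    rw [le_antisymm (by simpa using hyn) hy]
    exact zero_mem s
  | n + 1, y, hy, hyn => by
    have hrest : y - y ⊓ u ≤ n • u := by
      rw [sub_inf, sub_self]
      exact sup_le (nsmul_nonneg hu n) (sub_le_iff_le_add.mpr (succ_nsmul u n ▸ hyn))
    rw [← sub_add_cancel y (y ⊓ u)]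
    exact add_mem (mem_of_nonneg_of_le_nsmul hu hs (sub_nonneg.mpr inf_le_left) hrest)
      (hs ⟨le_inf hy hu, inf_le_right⟩)

lemma mem_of_abs_le_nsmul [AddSubgroupClass S G] (hu : 0 ≤ u) (hs : Icc 0 u ⊆ s) {n : ℕ} {x : G}
    (hx : |x| ≤ n • u) : x ∈ s := by
  have hnu : 0 ≤ n • u := nsmul_nonneg hu n
  rw [← posPart_sub_negPart x]
  exact sub_mem
    (mem_of_nonneg_of_le_nsmul hu hs (posPart_nonneg x) (sup_le ((le_abs_self x).trans hx) hnu))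
    (mem_of_nonneg_of_le_nsmul hu hs (negPart_nonneg x) (sup_le ((neg_le_abs x).trans hx) hnu))

end LatticeOrderedGroup

section LatticeOrderedRing

variable {R : Type*} [NonUnitalRing R] [Lattice R] [AddLeftMono R]

lemma abs_mul_le_mul_of_abs_le (hmul : ∀ x y : R, 0 ≤ x → 0 ≤ y → 0 ≤ x * y) {x y a b : R}
    (hx : |x| ≤ a) (hy : |y| ≤ b) : |x * y| ≤ a * b := by
  obtain ⟨hxa, hxa'⟩ := abs_le'.mp hx
  obtain ⟨hyb, hyb'⟩ := abs_le'.mp hy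
  have ha₁ : 0 ≤ a - x := sub_nonneg.mpr hxa
  have ha₂ : 0 ≤ a + x := neg_le_iff_add_nonneg.mp hxa'
  have hb₁ : 0 ≤ b - y := sub_nonneg.mpr hyb
  have hb₂ : 0 ≤ b + y := neg_le_iff_add_nonneg.mp hyb'
  refine abs_le'.mpr ⟨sub_nonneg.mp (nsmul_two_semiclosed ?_), ?_⟩
  · calc (0 : R) ≤ (a - x) * (b + y) + (a + x) * (b - y) :=
          add_nonneg (hmul _ _ ha₁ hb₂) (hmul _ _ ha₂ hb₁)
      _ = 2 • (a * b - x * y) := by noncomm_ring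
  · rw [← sub_nonneg, sub_neg_eq_add]
    refine nsmul_two_semiclosed ?_
    calc (0 : R) ≤ (a - x) * (b - y) + (a + x) * (b + y) :=
          add_nonneg (hmul _ _ ha₁ hb₁) (hmul _ _ ha₂ hb₂)
      _ = 2 • (a * b + x * y) := by noncomm_ring

variable {u : R}

def boundedSubring (hmul : ∀ x y : R, 0 ≤ x → 0 ≤ y → 0 ≤ x * y) (huu : u * u ≤ u) :
    NonUnitalSubring R where
  carrier := {x | ∃ n : ℕ, |x| ≤ n • u}
  zero_mem' := ⟨0, by simp⟩
  add_mem' := by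
    rintro x y ⟨n, hn⟩ ⟨m, hm⟩
    exact ⟨n + m, (abs_add_le x y).trans (add_nsmul u n m ▸ add_le_add hn hm)⟩
  neg_mem' := by
    rintro x ⟨n, hn⟩
    exact ⟨n, by rwa [abs_neg]⟩
  mul_mem' := by
    rintro x y ⟨n, hn⟩ ⟨m, hm⟩
    refine ⟨n * m, (abs_mul_le_mul_of_abs_le hmul hn hm).trans ?_⟩
    rw [smul_mul_smul]
    exact nsmul_le_nsmul_right huu (n * m)

lemma closure_Icc_eq_boundedSubring (hmul : ∀ x y : R, 0 ≤ x → 0 ≤ y → 0 ≤ x * y) (hu : 0 ≤ u)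
    (huu : u * u ≤ u) :
    NonUnitalSubring.closure (Icc 0 u) = boundedSubring hmul huu := by
  refine le_antisymm (NonUnitalSubring.closure_le.mpr fun x hx ↦ ⟨1, ?_⟩)
    fun x ⟨_, hx⟩ ↦ mem_of_abs_le_nsmul hu NonUnitalSubring.subset_closure hx
  rw [one_nsmul, abs_of_nonneg hx.1]
  exact hx.2

end LatticeOrderedRing

/-- Let `R` be a commutative ring with a lattice order compatible
with addition, in which products of nonnegative elements are nonnegative, and let
`u > 0` satisfy `a·b ≤ a ⊓ b` for all `a, b ∈ [0, u]` (semi-lowness on the segment).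
Then the (non-unital) subring of `R` generated by `[0, u]` equals
`{x : ∃ n, |x| ≤ n • u}` (with `|x| = x ⊔ -x`); in particular, if `u` is a strong
unit of `R`, then `R` is generated as a ring by the segment `[0, u]`. -/
theorem semilow_ring_generated_by_segment {R : Type*} [CommRing R] [Lattice R]
    [CovariantClass R R (· + ·) (· ≤ ·)]
    (mul_nonneg' : ∀ x y : R, 0 ≤ x → 0 ≤ y → 0 ≤ x * y)
    (u : R) (hu : 0 < u)
    (semilow : ∀ a b : R, a ∈ Set.Icc (0 : R) u → b ∈ Set.Icc (0 : R) u →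
      a * b ≤ a ⊓ b) :
    (NonUnitalSubring.closure (Set.Icc (0 : R) u) : Set R)
        = {x : R | ∃ n : ℕ, x ⊔ -x ≤ n • u} ∧
    ((∀ x : R, ∃ n : ℕ, x ⊔ -x ≤ n • u) →
      NonUnitalSubring.closure (Set.Icc (0 : R) u) = (⊤ : NonUnitalSubring R)) := by
  have huu : u * u ≤ u := by simpa using semilow u u ⟨hu.le, le_rfl⟩ ⟨hu.le, le_rfl⟩
  have hclosure := closure_Icc_eq_boundedSubring mul_nonneg' hu.le huu
  refine ⟨congrArg SetLike.coe hclosure, fun hbounded ↦ ?_⟩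
  rw [hclosure, eq_top_iff]
  exact fun x _ ↦ hbounded x
end

section
/- Let R be a commutative ring equipped with a lattice order such that addition is compatible with the order and products of nonnegative elements are nonnegative, let u > 0, and let A ⊆ [0, u] be a subset containing 0 and u, closed under the operations x ↦ u − x, (x, y) ↦ (x + y) ⊓ u, and under the ring product, and satisfying a·b ≤ a ⊓ b for all a, b ∈ A. Let A^♯ be the subring of R generated by A. Then: (i) u is a strong unit of A^♯, i.e. for every x ∈ A^♯ there is n ∈ ℕ with |x| ≤ n•u; (ii) a·b ≤ a ⊓ b for all a, b ∈ A^♯ ∩ [0, u]; and (iii) A^♯ ∩ [0, u] = A. -/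
/-!
Write `M` for the additive monoid generated by `A`. Since `A` is closed under products, `A^♯` is
the additive group generated by `A`, i.e. `A^♯ = M - M`, and (i) is immediate from `A ⊆ [0, u]`.
The MV-operations give truncated differences `(a - c)⁺ ∈ A` for `a, c ∈ A`; with
`a + y - b = (a - b)⁺ + (y - (b - a)⁺)` this lets one subtract from an element of `M` any
smaller element of `A`, and then any smaller element of `M`, without leaving `M`. So
`A^♯ ∩ [0, u] = M ∩ [0, u]`, which is `A` because `⊕` agrees with `+` below `u`. This is (iii),
and (ii) follows from it.
-/

theorem NonUnitalSubring.mem_closure_iff_of_mul_mem {R : Type*} [NonUnitalNonAssocRing R]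
    {s : Set R} (hs : ∀ x ∈ s, ∀ y ∈ s, x * y ∈ s) {x : R} :
    x ∈ closure s ↔ x ∈ AddSubgroup.closure s := by
  let S : Subsemigroup R := ⟨s, fun ha hb => hs _ ha _ hb⟩
  rw [mem_closure_iff, show (Subsemigroup.closure s : Set R) = s from
    congrArg SetLike.coe (Subsemigroup.closure_eq S)]

theorem AddSubgroup.exists_sub_of_mem_closure {G : Type*} [AddCommGroup G] {s : Set G} {x : G}
    (hx : x ∈ closure s) :
    ∃ p ∈ AddSubmonoid.closure s, ∃ q ∈ AddSubmonoid.closure s, p - q = x := by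
  induction hx using closure_induction with
  | mem a ha => exact ⟨a, AddSubmonoid.subset_closure ha, 0, zero_mem _, sub_zero a⟩
  | zero => exact ⟨0, zero_mem _, 0, zero_mem _, sub_zero 0⟩
  | add _ _ _ _ hx hy =>
    obtain ⟨p, hp, q, hq, rfl⟩ := hx
    obtain ⟨p', hp', q', hq', rfl⟩ := hy
    exact ⟨p + p', add_mem hp hp', q + q', add_mem hq hq', (sub_add_sub_comm p q p' q').symm⟩
  | neg _ _ hx =>
    obtain ⟨p, hp, q, hq, rfl⟩ := hx
    exact ⟨q, hq, p, hp, (neg_sub p q).symm⟩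

section OrderedMonoid

variable {M : Type*} [AddCommMonoid M] [Preorder M] [AddLeftMono M] {s : Set M} {x : M}

theorem AddSubmonoid.nonneg_of_mem_closure (hs : s ⊆ Set.Ici 0) (hx : x ∈ closure s) : 0 ≤ x :=
  (closure_le (S := nonneg M)).mpr hs hx

theorem AddSubmonoid.exists_le_nsmul_of_mem_closure {u : M} (hs : s ⊆ Set.Iic u)
    (hx : x ∈ closure s) : ∃ n : ℕ, x ≤ n • u := by
  induction hx using closure_induction with
  | mem a ha => exact ⟨1, (one_nsmul u).symm ▸ hs ha⟩
  | zero => exact ⟨0, (zero_nsmul u).symm.le⟩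
  | add _ _ _ _ hx hy =>
    obtain ⟨m, hm⟩ := hx
    obtain ⟨n, hn⟩ := hy
    exact ⟨m + n, add_nsmul u m n ▸ add_le_add hm hn⟩

end OrderedMonoid

theorem AddSubgroup.exists_abs_le_nsmul_of_mem_closure {G : Type*} [AddCommGroup G] [Lattice G]
    [AddLeftMono G] {s : Set G} {u : G} (hs : s ⊆ Set.Icc 0 u) {x : G}
    (hx : x ∈ closure s) : ∃ n : ℕ, |x| ≤ n • u := by
  obtain ⟨p, hp, q, hq, rfl⟩ := exists_sub_of_mem_closure hx
  have hp0 := AddSubmonoid.nonneg_of_mem_closure (fun a ha => (hs ha).1) hp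
  have hq0 := AddSubmonoid.nonneg_of_mem_closure (fun a ha => (hs ha).1) hq
  obtain ⟨m, hm⟩ := AddSubmonoid.exists_le_nsmul_of_mem_closure (fun a ha => (hs ha).2) hp
  obtain ⟨n, hn⟩ := AddSubmonoid.exists_le_nsmul_of_mem_closure (fun a ha => (hs ha).2) hq
  have habs : |p - q| ≤ p + q := sup_le
    ((sub_le_self p hq0).trans (le_add_of_nonneg_right hq0))
    (by rw [neg_sub]; exact (sub_le_self q hp0).trans (le_add_of_nonneg_left hp0))
  exact ⟨m + n, habs.trans (add_nsmul u m n ▸ add_le_add hm hn)⟩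

/-- `A` is a subalgebra of the MV-algebra `Γ(R, u) = [0, u]`, whose operations are
`¬x = u - x` and `x ⊕ y = (x + y) ⊓ u`. -/
structure IsMVSubalgebra {R : Type*} [AddCommGroup R] [Lattice R] (u : R) (A : Set R) : Prop where
  subset_Icc : A ⊆ Set.Icc 0 u
  zero_mem : 0 ∈ A
  unit_sub_mem : ∀ x ∈ A, u - x ∈ A
  add_inf_mem : ∀ x ∈ A, ∀ y ∈ A, (x + y) ⊓ u ∈ A

namespace IsMVSubalgebra

variable {R : Type*} [AddCommGroup R] [Lattice R] [AddLeftMono R] {u : R} {A : Set R}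
  (hA : IsMVSubalgebra u A)
include hA

theorem nonneg_of_mem_addClosure {x : R} (hx : x ∈ AddSubmonoid.closure A) : 0 ≤ x :=
  AddSubmonoid.nonneg_of_mem_closure (fun _ ha => (hA.subset_Icc ha).1) hx

theorem posPart_sub_mem {a c : R} (ha : a ∈ A) (hc : c ∈ A) : (a - c)⁺ ∈ A := by
  have key : (a - c)⁺ = u - (u - a + c) ⊓ u := by
    rw [posPart_def, sub_inf, sub_self, sub_add, sub_sub_cancel]
  exact key ▸ hA.unit_sub_mem _ (hA.add_inf_mem _ (hA.unit_sub_mem _ ha) _ hc)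

theorem mem_of_mem_addClosure_of_le {x : R} (hx : x ∈ AddSubmonoid.closure A) (hxu : x ≤ u) :
    x ∈ A := by
  induction hx using AddSubmonoid.closure_induction_left with
  | zero => exact hA.zero_mem
  | add_left a ha y _ ih =>
    have hyu : y ≤ u := (le_add_of_nonneg_left (hA.subset_Icc ha).1).trans hxu
    simpa only [inf_eq_left.mpr hxu] using hA.add_inf_mem a ha y (ih hyu)

theorem sub_mem_addClosure_of_mem {x b : R} (hx : x ∈ AddSubmonoid.closure A) (hb : b ∈ A)
    (hbx : b ≤ x) : x - b ∈ AddSubmonoid.closure A := by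
  induction hx using AddSubmonoid.closure_induction_left generalizing b with
  | zero =>
    rw [le_antisymm hbx (hA.subset_Icc hb).1, sub_zero]
    exact (AddSubmonoid.closure A).zero_mem
  | add_left a ha y hy ih =>
    -- the negative part `(a - b)⁻ = (b - a)⁺` of `a - b` is what remains to be taken from `y`
    have hsplit : a + y - b = (a - b)⁺ + (y - (b - a)⁺) := by
      rw [← neg_sub a b, posPart_neg]
      calc a + y - b = (a - b)⁺ - (a - b)⁻ + y := by rw [posPart_sub_negPart]; abel
        _ = _ := by abel
    have hle : (b - a)⁺ ≤ y :=
      sup_le (sub_le_iff_le_add'.mpr hbx) (hA.nonneg_of_mem_addClosure hy)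
    rw [hsplit]
    exact add_mem (AddSubmonoid.subset_closure (hA.posPart_sub_mem ha hb))
      (ih (hA.posPart_sub_mem hb ha) hle)

theorem sub_mem_addClosure {x y : R} (hx : x ∈ AddSubmonoid.closure A)
    (hy : y ∈ AddSubmonoid.closure A) (hyx : y ≤ x) : x - y ∈ AddSubmonoid.closure A := by
  induction hy using AddSubmonoid.closure_induction_left generalizing x with
  | zero => rwa [sub_zero]
  | add_left b hb y hy ih =>
    have hbx : b ≤ x :=
      (le_add_of_nonneg_right (hA.nonneg_of_mem_addClosure hy)).trans hyx
    rw [← sub_sub]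
    exact ih (hA.sub_mem_addClosure_of_mem hx hb hbx) (le_sub_iff_add_le'.mpr hyx)

theorem addSubgroupClosure_inter_Icc :
    (AddSubgroup.closure A : Set R) ∩ Set.Icc 0 u = A := by
  refine Set.Subset.antisymm ?_ fun x hx => ⟨AddSubgroup.subset_closure hx, hA.subset_Icc hx⟩
  rintro _ ⟨hx, hx0, hxu⟩
  obtain ⟨p, hp, q, hq, rfl⟩ := AddSubgroup.exists_sub_of_mem_closure hx
  exact hA.mem_of_mem_addClosure_of_le (hA.sub_mem_addClosure hp hq (sub_nonneg.mp hx0)) hxu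

end IsMVSubalgebra

theorem pmvf_generates_semilow_lu_ring_general {R : Type*} [CommRing R] [Lattice R]
    [CovariantClass R R (· + ·) (· ≤ ·)]
    (u : R)
    (A : Set R) (hA : A ⊆ Set.Icc (0 : R) u)
    (h0 : (0 : R) ∈ A)
    (hneg : ∀ x ∈ A, u - x ∈ A)
    (hoplus : ∀ x ∈ A, ∀ y ∈ A, (x + y) ⊓ u ∈ A)
    (hmul : ∀ x ∈ A, ∀ y ∈ A, x * y ∈ A)
    (hsl : ∀ x ∈ A, ∀ y ∈ A, x * y ≤ x ⊓ y) :
    (∀ x ∈ NonUnitalSubring.closure A, ∃ n : ℕ, x ⊔ -x ≤ n • u) ∧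
    (∀ a b : R, a ∈ NonUnitalSubring.closure A → b ∈ NonUnitalSubring.closure A →
      a ∈ Set.Icc (0 : R) u → b ∈ Set.Icc (0 : R) u → a * b ≤ a ⊓ b) ∧
    (NonUnitalSubring.closure A : Set R) ∩ Set.Icc (0 : R) u = A := by
  have hMV : IsMVSubalgebra u A := ⟨hA, h0, hneg, hoplus⟩
  have hclosure : (NonUnitalSubring.closure A : Set R) = AddSubgroup.closure A :=
    Set.ext fun _ => NonUnitalSubring.mem_closure_iff_of_mul_mem hmul
  have hΓ : (NonUnitalSubring.closure A : Set R) ∩ Set.Icc 0 u = A :=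
    hclosure ▸ hMV.addSubgroupClosure_inter_Icc
  refine ⟨fun x hx => ?_, fun a b ha hb ha' hb' => ?_, hΓ⟩
  · exact AddSubgroup.exists_abs_le_nsmul_of_mem_closure hA ((Set.ext_iff.mp hclosure x).mp hx)
  · exact hsl a (hΓ ▸ ⟨ha, ha'⟩) b (hΓ ▸ ⟨hb, hb'⟩)

/-- Let `R` be a commutative ring with a lattice order compatible
with addition, in which products of nonnegative elements are nonnegative, let
`u > 0`, and let `A ⊆ [0, u]` contain `0` and `u`, be closed under `x ↦ u - x`,
`(x, y) ↦ (x + y) ⊓ u` and the ring product, and satisfy `a·b ≤ a ⊓ b` on `A`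
(i.e. `A` is a `PMV_f`-algebra sitting inside `[0, u]`). Let `A^♯` be the
(non-unital) subring of `R` generated by `A`. Then: (i) `u` is a strong unit of
`A^♯`; (ii) `a·b ≤ a ⊓ b` for all `a, b ∈ A^♯ ∩ [0, u]` (so `A^♯` is a semi-low
`l_u`-ring); and (iii) `A^♯ ∩ [0, u] = A` (i.e. `A = Γ(A^♯, u)`). -/
theorem pmvf_generates_semilow_lu_ring {R : Type*} [CommRing R] [Lattice R]
    [CovariantClass R R (· + ·) (· ≤ ·)]
    (mul_nonneg' : ∀ x y : R, 0 ≤ x → 0 ≤ y → 0 ≤ x * y)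
    (u : R) (hu : 0 < u)
    (A : Set R) (hA : A ⊆ Set.Icc (0 : R) u)
    (h0 : (0 : R) ∈ A) (huA : u ∈ A)
    (hneg : ∀ x ∈ A, u - x ∈ A)
    (hoplus : ∀ x ∈ A, ∀ y ∈ A, (x + y) ⊓ u ∈ A)
    (hmul : ∀ x ∈ A, ∀ y ∈ A, x * y ∈ A)
    (hsl : ∀ x ∈ A, ∀ y ∈ A, x * y ≤ x ⊓ y) :
    (∀ x ∈ NonUnitalSubring.closure A, ∃ n : ℕ, x ⊔ -x ≤ n • u) ∧
    (∀ a b : R, a ∈ NonUnitalSubring.closure A → b ∈ NonUnitalSubring.closure A →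
      a ∈ Set.Icc (0 : R) u → b ∈ Set.Icc (0 : R) u → a * b ≤ a ⊓ b) ∧
    (NonUnitalSubring.closure A : Set R) ∩ Set.Icc (0 : R) u = A :=
  pmvf_generates_semilow_lu_ring_general u A hA h0 hneg hoplus hmul hsl
end

section
/- Let (R, u) be a semi-low l_u-ring and let J be an ideal of the MV-algebra Γ(R, u). Then the additive subgroup J^♯ of R generated by J (equivalently, the set of all finite sums Σ ε_i c_i with c_i ∈ J and ε_i ∈ {−1, 1}) equals {x ∈ R : |x| ⊓ u ∈ J}. -/
/-!
The inclusion `⊆` holds because `{x | |x| ⊓ u ∈ J}` is already an additive subgroup: truncation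
by `u` is subadditive on nonnegative elements, so `|x + y| ⊓ u ≤ (|x| ⊓ u + |y| ⊓ u) ⊓ u`.
Conversely, writing `x = x⁺ - x⁻` reduces to nonnegative `y ≤ n • u` with `y ⊓ u ∈ J`; peeling off
`y = y ⊓ u + (y - u)⁺`, where `(y - u)⁺ ≤ (n - 1) • u`, shows `y ∈ J^♯` by induction on `n`.
-/

section

variable {G : Type*} [AddCommGroup G] [Lattice G]

lemma add_inf_le_inf_add_inf [AddLeftMono G] {a b c : G} (ha : 0 ≤ a) (hb : 0 ≤ b)
    (hc : 0 ≤ c) : (a + b) ⊓ c ≤ a ⊓ c + b ⊓ c := by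
  rw [add_inf, inf_add, inf_add]
  refine le_inf (le_inf inf_le_left ?_) (le_inf ?_ ?_) <;> refine inf_le_right.trans ?_
  · exact le_add_of_nonneg_right hb
  · exact le_add_of_nonneg_left ha
  · exact le_add_of_nonneg_left hc

/-- An ideal of the MV-algebra `Γ(G, u)`, i.e. of `[0, u]` with `a ⊕ b = (a + b) ⊓ u`. -/
structure IsMVIdeal (u : G) (J : Set G) : Prop where
  subset_Icc : J ⊆ Set.Icc 0 u
  zero_mem : (0 : G) ∈ J
  mem_of_le : ∀ a ∈ Set.Icc 0 u, ∀ b ∈ J, a ≤ b → a ∈ J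
  inf_add_mem : ∀ a ∈ J, ∀ b ∈ J, (a + b) ⊓ u ∈ J

namespace IsMVIdeal

variable {u : G} {J : Set G} (hJ : IsMVIdeal u J)
include hJ

lemma unit_nonneg : 0 ≤ u := (hJ.subset_Icc hJ.zero_mem).2

lemma inf_mem_of_le {x y : G} (hx : 0 ≤ x) (hxy : x ≤ y) (hy : y ⊓ u ∈ J) : x ⊓ u ∈ J :=
  hJ.mem_of_le _ ⟨le_inf hx hJ.unit_nonneg, inf_le_right⟩ _ hy (inf_le_inf_right u hxy)

variable [AddLeftMono G]

def absInfSubgroup : AddSubgroup G where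
  carrier := {x | |x| ⊓ u ∈ J}
  zero_mem' := by simpa [inf_eq_left.mpr hJ.unit_nonneg] using hJ.zero_mem
  add_mem' {x y} hx hy := by
    refine hJ.mem_of_le _ ⟨le_inf (abs_nonneg _) hJ.unit_nonneg, inf_le_right⟩ _
      (hJ.inf_add_mem _ hx _ hy) (le_inf ?_ inf_le_right)
    calc |x + y| ⊓ u ≤ (|x| + |y|) ⊓ u := inf_le_inf_right u (abs_add_le x y)
      _ ≤ |x| ⊓ u + |y| ⊓ u := add_inf_le_inf_add_inf (abs_nonneg x) (abs_nonneg y)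
          hJ.unit_nonneg
  neg_mem' {x} hx := by simpa only [Set.mem_ofPred_eq, abs_neg] using hx

lemma closure_le_absInfSubgroup : AddSubgroup.closure J ≤ hJ.absInfSubgroup := by
  refine (AddSubgroup.closure_le _).mpr fun c hc => ?_
  obtain ⟨hc0, hcu⟩ := hJ.subset_Icc hc
  change |c| ⊓ u ∈ J
  rwa [abs_of_nonneg hc0, inf_eq_left.mpr hcu]

lemma mem_closure_of_nonneg_of_le_nsmul {n : ℕ} {y : G} (hy0 : 0 ≤ y) (hyn : y ≤ n • u)
    (hyJ : y ⊓ u ∈ J) : y ∈ AddSubgroup.closure J := by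
  induction n generalizing y with
  | zero => simp [le_antisymm (by simpa using hyn) hy0]
  | succ n ih =>
    have hsplit : y ⊓ u + (y - u)⁺ = y := by rw [inf_eq_sub_posPart_sub, sub_add_cancel]
    have hrest_le : (y - u)⁺ ≤ y := sup_le (sub_le_self y hJ.unit_nonneg) hy0
    have hrest_n : (y - u)⁺ ≤ n • u :=
      sup_le (sub_le_iff_le_add.mpr (succ_nsmul u n ▸ hyn)) (nsmul_nonneg hJ.unit_nonneg n)
    rw [← hsplit]
    exact add_mem (AddSubgroup.subset_closure hyJ)
      (ih (posPart_nonneg _) hrest_n (hJ.inf_mem_of_le (posPart_nonneg _) hrest_le hyJ))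

lemma mem_closure_of_abs_inf_mem {n : ℕ} {x : G} (hxn : |x| ≤ n • u) (hx : |x| ⊓ u ∈ J) :
    x ∈ AddSubgroup.closure J := by
  have hpos : x⁺ ≤ |x| := sup_le (le_abs_self x) (abs_nonneg x)
  have hneg : x⁻ ≤ |x| := sup_le (neg_le_abs x) (abs_nonneg x)
  rw [← posPart_sub_negPart x]
  exact sub_mem
    (hJ.mem_closure_of_nonneg_of_le_nsmul (posPart_nonneg x) (hpos.trans hxn)
      (hJ.inf_mem_of_le (posPart_nonneg x) hpos hx))
    (hJ.mem_closure_of_nonneg_of_le_nsmul (negPart_nonneg x) (hneg.trans hxn)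
      (hJ.inf_mem_of_le (negPart_nonneg x) hneg hx))

end IsMVIdeal

end

theorem mv_ideal_generates_l_ideal_general {R : Type*} [CommRing R] [Lattice R]
    [CovariantClass R R (· + ·) (· ≤ ·)]
    (u : R)
    (strong : ∀ x : R, ∃ n : ℕ, x ⊔ -x ≤ n • u)
    (J : Set R) (hJ : J ⊆ Set.Icc (0 : R) u) (h0 : (0 : R) ∈ J)
    (hdown : ∀ a ∈ Set.Icc (0 : R) u, ∀ b ∈ J, a ≤ b → a ∈ J)
    (hadd : ∀ a ∈ J, ∀ b ∈ J, (a + b) ⊓ u ∈ J) :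
    (AddSubgroup.closure J : Set R) = {x : R | (x ⊔ -x) ⊓ u ∈ J} := by
  have hJ' : IsMVIdeal u J := ⟨hJ, h0, hdown, hadd⟩
  refine Set.Subset.antisymm (fun x hx => hJ'.closure_le_absInfSubgroup hx) fun x hx => ?_
  obtain ⟨n, hn⟩ := strong x
  exact hJ'.mem_closure_of_abs_inf_mem hn hx

/-- Let `(R, u)` be a semi-low `l_u`-ring and let `J` be an ideal of
the MV-algebra `Γ(R, u) = [0, u]` (so `0 ∈ J`, `J` is downward closed in `[0, u]`,
and `J` is closed under the truncated sum `(a + b) ⊓ u`). Then the additive subgroup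
`J^♯` of `R` generated by `J` equals `{x ∈ R : |x| ⊓ u ∈ J}` (with `|x| = x ⊔ -x`). -/
theorem mv_ideal_generates_l_ideal {R : Type*} [CommRing R] [Lattice R]
    [CovariantClass R R (· + ·) (· ≤ ·)]
    (mul_nonneg' : ∀ x y : R, 0 ≤ x → 0 ≤ y → 0 ≤ x * y)
    (u : R) (hu : 0 < u)
    (strong : ∀ x : R, ∃ n : ℕ, x ⊔ -x ≤ n • u)
    (semilow : ∀ a b : R, a ∈ Set.Icc (0 : R) u → b ∈ Set.Icc (0 : R) u →
      a * b ≤ a ⊓ b)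
    (J : Set R) (hJ : J ⊆ Set.Icc (0 : R) u) (h0 : (0 : R) ∈ J)
    (hdown : ∀ a ∈ Set.Icc (0 : R) u, ∀ b ∈ J, a ≤ b → a ∈ J)
    (hadd : ∀ a ∈ J, ∀ b ∈ J, (a + b) ⊓ u ∈ J) :
    (AddSubgroup.closure J : Set R) = {x : R | (x ⊔ -x) ⊓ u ∈ J} :=
  mv_ideal_generates_l_ideal_general u strong J hJ h0 hdown hadd
end

section
/- Let (R, u) be a semi-low l_u-ring and let J be an ideal of the MV-algebra Γ(R, u). Then the additive subgroup J^♯ of R generated by J is an L-ideal of the l_u-ring R: it is order-convex (x ∈ J^♯ and |y| ≤ |x| imply y ∈ J^♯) and absorbent (r ∈ R and x ∈ J^♯ imply r·x ∈ J^♯). -/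
/-!
An element `x` lies in the subgroup generated by `J` exactly when `|x| ≤ s` for some finite
sum `s` of elements of `J`. One direction is the triangle inequality. For the other, write
`x = x⁺ - x⁻`: since `J` is a down-set of positive elements, the Riesz decomposition property
of lattice-ordered groups splits any `0 ≤ c ≤ a₁ + ⋯ + aₖ` with `aᵢ ∈ J` as `c₁ + ⋯ + cₖ`
with `0 ≤ cᵢ ≤ aᵢ`, hence `cᵢ ∈ J`. Order-convexity is immediate from this description. For
absorption, `|r x| ≤ |r| |x| ≤ (n • u) s = n • (u s) ≤ n • s`, where `u a ≤ u ⊓ a ≤ a` for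
`a ∈ J` is the semi-low condition.
-/

section LatticeOrderedGroup

variable {G : Type*} [AddCommGroup G] [Lattice G] [AddLeftMono G]

theorem posPart_le_abs (a : G) : a⁺ ≤ |a| :=
  sup_le (le_abs_self a) (abs_nonneg a)

theorem negPart_le_abs (a : G) : a⁻ ≤ |a| := by
  simpa only [posPart_neg, abs_neg] using posPart_le_abs (-a)

theorem exists_add_eq_of_le_add {a b c : G} (ha : 0 ≤ a) (hb : 0 ≤ b) (hc : 0 ≤ c)
    (hcab : c ≤ a + b) : ∃ c₁ c₂, 0 ≤ c₁ ∧ c₁ ≤ a ∧ 0 ≤ c₂ ∧ c₂ ≤ b ∧ c₁ + c₂ = c := by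
  refine ⟨c ⊓ a, c - c ⊓ a, le_inf hc ha, inf_le_right, sub_nonneg.2 inf_le_left, ?_,
    add_sub_cancel _ _⟩
  rw [sub_inf, sub_self]
  exact sup_le hb (sub_le_iff_le_add.2 (by rwa [add_comm]))

variable {J : Set G}

theorem nonneg_of_mem_addSubmonoidClosure (hJ : ∀ a ∈ J, 0 ≤ a) {s : G}
    (hs : s ∈ AddSubmonoid.closure J) : 0 ≤ s :=
  AddSubmonoid.closure_induction hJ le_rfl (fun _ _ _ _ => add_nonneg) hs

theorem mem_addSubmonoidClosure_of_le (hJ : ∀ a ∈ J, 0 ≤ a)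
    (hdown : ∀ a b, 0 ≤ a → a ≤ b → b ∈ J → a ∈ J) {c s : G} (hc : 0 ≤ c) (hcs : c ≤ s)
    (hs : s ∈ AddSubmonoid.closure J) : c ∈ AddSubmonoid.closure J := by
  induction hs using AddSubmonoid.closure_induction generalizing c with
  | mem a ha => exact AddSubmonoid.subset_closure (hdown c a hc hcs ha)
  | zero => rw [le_antisymm hcs hc]; exact zero_mem _
  | add a b ha hb iha ihb =>
    obtain ⟨c₁, c₂, hc₁, hc₁a, hc₂, hc₂b, rfl⟩ :=
      exists_add_eq_of_le_add (nonneg_of_mem_addSubmonoidClosure hJ ha)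
        (nonneg_of_mem_addSubmonoidClosure hJ hb) hc hcs
    exact add_mem (iha hc₁ hc₁a) (ihb hc₂ hc₂b)

theorem mem_addSubgroupClosure_iff_abs_le (hJ : ∀ a ∈ J, 0 ≤ a)
    (hdown : ∀ a b, 0 ≤ a → a ≤ b → b ∈ J → a ∈ J) {x : G} :
    x ∈ AddSubgroup.closure J ↔ ∃ s ∈ AddSubmonoid.closure J, |x| ≤ s := by
  constructor
  · intro hx
    induction hx using AddSubgroup.closure_induction with
    | mem a ha => exact ⟨a, AddSubmonoid.subset_closure ha, (abs_of_nonneg (hJ a ha)).le⟩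
    | zero => exact ⟨0, zero_mem _, abs_zero.le⟩
    | add x y _ _ hx hy =>
      obtain ⟨s, hs, hxs⟩ := hx
      obtain ⟨t, ht, hyt⟩ := hy
      exact ⟨s + t, add_mem hs ht, (abs_add_le x y).trans (add_le_add hxs hyt)⟩
    | neg x _ hx => simpa only [abs_neg] using hx
  · rintro ⟨s, hs, hxs⟩
    have hle := AddSubgroup.le_closure_toAddSubmonoid J
    rw [← posPart_sub_negPart x]
    exact sub_mem
      (hle (mem_addSubmonoidClosure_of_le hJ hdown (posPart_nonneg x)
        ((posPart_le_abs x).trans hxs) hs))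
      (hle (mem_addSubmonoidClosure_of_le hJ hdown (negPart_nonneg x)
        ((negPart_le_abs x).trans hxs) hs))

end LatticeOrderedGroup

section LatticeOrderedRing

variable {R : Type*} [Ring R] [Lattice R] [AddLeftMono R]

theorem posMulMono_of_mul_nonneg (h : ∀ x y : R, 0 ≤ x → 0 ≤ y → 0 ≤ x * y) :
    PosMulMono R :=
  ⟨fun a ha b c hbc => sub_nonneg.1 (by simpa only [mul_sub] using h a _ ha (sub_nonneg.2 hbc))⟩

theorem mulPosMono_of_mul_nonneg (h : ∀ x y : R, 0 ≤ x → 0 ≤ y → 0 ≤ x * y) :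
    MulPosMono R :=
  ⟨fun a ha b c hbc => sub_nonneg.1 (by simpa only [sub_mul] using h _ a (sub_nonneg.2 hbc) ha)⟩

theorem abs_sub_mul_sub_le_add_mul_add [PosMulMono R] {p n q m : R} (hp : 0 ≤ p) (hn : 0 ≤ n)
    (hq : 0 ≤ q) (hm : 0 ≤ m) : |(p - n) * (q - m)| ≤ (p + n) * (q + m) := by
  have sub_le_add (a : R) {b : R} (hb : 0 ≤ b) : a - b ≤ a + b :=
    (sub_le_self a hb).trans (le_add_of_nonneg_right hb)
  have hpm : 0 ≤ p * m + n * q := add_nonneg (mul_nonneg hp hm) (mul_nonneg hn hq)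
  have hpq : 0 ≤ p * q + n * m := add_nonneg (mul_nonneg hp hq) (mul_nonneg hn hm)
  refine abs_le'.2 ⟨?_, ?_⟩
  · calc (p - n) * (q - m) = (p * q + n * m) - (p * m + n * q) := by noncomm_ring
      _ ≤ (p * q + n * m) + (p * m + n * q) := sub_le_add _ hpm
      _ = (p + n) * (q + m) := by noncomm_ring
  · calc -((p - n) * (q - m)) = (p * m + n * q) - (p * q + n * m) := by noncomm_ring
      _ ≤ (p * m + n * q) + (p * q + n * m) := sub_le_add _ hpq
      _ = (p + n) * (q + m) := by noncomm_ring

theorem abs_mul_le_abs_mul_abs [PosMulMono R] (r x : R) : |r * x| ≤ |r| * |x| := by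
  simpa only [posPart_sub_negPart, posPart_add_negPart] using
    abs_sub_mul_sub_le_add_mul_add (posPart_nonneg r) (negPart_nonneg r) (posPart_nonneg x)
      (negPart_nonneg x)

theorem mul_le_self_of_mem_addSubmonoidClosure {u : R} {J : Set R} (hu : ∀ a ∈ J, u * a ≤ a)
    {s : R} (hs : s ∈ AddSubmonoid.closure J) : u * s ≤ s := by
  induction hs using AddSubmonoid.closure_induction with
  | mem a ha => exact hu a ha
  | zero => rw [mul_zero]
  | add a b _ _ ha hb => rw [mul_add]; exact add_le_add ha hb

theorem mul_mem_addSubgroupClosure [PosMulMono R] [MulPosMono R] {u : R} {J : Set R}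
    (hJ : ∀ a ∈ J, 0 ≤ a) (hdown : ∀ a b, 0 ≤ a → a ≤ b → b ∈ J → a ∈ J)
    (hu : ∀ a ∈ J, u * a ≤ a) {r x : R} (hr : ∃ n : ℕ, |r| ≤ n • u)
    (hx : x ∈ AddSubgroup.closure J) : r * x ∈ AddSubgroup.closure J := by
  obtain ⟨s, hs, hxs⟩ := (mem_addSubgroupClosure_iff_abs_le hJ hdown).1 hx
  obtain ⟨n, hrn⟩ := hr
  refine (mem_addSubgroupClosure_iff_abs_le hJ hdown).2
    ⟨n • s, AddSubmonoid.nsmul_mem _ hs n, ?_⟩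
  calc |r * x| ≤ |r| * |x| := abs_mul_le_abs_mul_abs r x
    _ ≤ (n • u) * s := mul_le_mul hrn hxs (abs_nonneg x) ((abs_nonneg r).trans hrn)
    _ = n • (u * s) := smul_mul_assoc n u s
    _ ≤ n • s := nsmul_le_nsmul_right (mul_le_self_of_mem_addSubmonoidClosure hu hs) n

end LatticeOrderedRing

theorem mv_ideal_generates_L_ideal_general {R : Type*} [CommRing R] [Lattice R]
    [CovariantClass R R (· + ·) (· ≤ ·)]
    (mul_nonneg' : ∀ x y : R, 0 ≤ x → 0 ≤ y → 0 ≤ x * y)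
    (u : R)
    (strong : ∀ x : R, ∃ n : ℕ, x ⊔ -x ≤ n • u)
    (semilow : ∀ a b : R, a ∈ Set.Icc (0 : R) u → b ∈ Set.Icc (0 : R) u →
      a * b ≤ a ⊓ b)
    (J : Set R) (hJ : J ⊆ Set.Icc (0 : R) u)
    (hdown : ∀ a ∈ Set.Icc (0 : R) u, ∀ b ∈ J, a ≤ b → a ∈ J) :
    (∀ x ∈ AddSubgroup.closure J, ∀ y : R, y ⊔ -y ≤ x ⊔ -x →
      y ∈ AddSubgroup.closure J) ∧
    (∀ r : R, ∀ x ∈ AddSubgroup.closure J, r * x ∈ AddSubgroup.closure J) := by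
  have := posMulMono_of_mul_nonneg mul_nonneg'
  have := mulPosMono_of_mul_nonneg mul_nonneg'
  have hJ₀ : ∀ a ∈ J, 0 ≤ a := fun a ha => (hJ ha).1
  have hJdown : ∀ a b, 0 ≤ a → a ≤ b → b ∈ J → a ∈ J := fun a b ha hab hb =>
    hdown a ⟨ha, hab.trans (hJ hb).2⟩ b hb hab
  have hJu : ∀ a ∈ J, u * a ≤ a := fun a ha =>
    (semilow u a ⟨(hJ ha).1.trans (hJ ha).2, le_rfl⟩ (hJ ha)).trans inf_le_right
  refine ⟨fun x hx y hyx => ?_,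
    fun r x hx => mul_mem_addSubgroupClosure hJ₀ hJdown hJu (strong r) hx⟩
  obtain ⟨s, hs, hxs⟩ := (mem_addSubgroupClosure_iff_abs_le hJ₀ hJdown).1 hx
  exact (mem_addSubgroupClosure_iff_abs_le hJ₀ hJdown).2 ⟨s, hs, hyx.trans hxs⟩

/-- Let `(R, u)` be a semi-low `l_u`-ring and let `J` be an ideal of
the MV-algebra `Γ(R, u) = [0, u]`. Then the additive subgroup `J^♯` of `R` generated
by `J` is an `L`-ideal of the `l_u`-ring `R`: it is order-convex (`x ∈ J^♯` and
`|y| ≤ |x|` imply `y ∈ J^♯`) and absorbent (`r ∈ R` and `x ∈ J^♯` imply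
`r·x ∈ J^♯`), where `|x| = x ⊔ -x`. -/
theorem mv_ideal_generates_L_ideal {R : Type*} [CommRing R] [Lattice R]
    [CovariantClass R R (· + ·) (· ≤ ·)]
    (mul_nonneg' : ∀ x y : R, 0 ≤ x → 0 ≤ y → 0 ≤ x * y)
    (u : R) (hu : 0 < u)
    (strong : ∀ x : R, ∃ n : ℕ, x ⊔ -x ≤ n • u)
    (semilow : ∀ a b : R, a ∈ Set.Icc (0 : R) u → b ∈ Set.Icc (0 : R) u →
      a * b ≤ a ⊓ b)
    (J : Set R) (hJ : J ⊆ Set.Icc (0 : R) u) (h0 : (0 : R) ∈ J)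
    (hdown : ∀ a ∈ Set.Icc (0 : R) u, ∀ b ∈ J, a ≤ b → a ∈ J)
    (hadd : ∀ a ∈ J, ∀ b ∈ J, (a + b) ⊓ u ∈ J) :
    (∀ x ∈ AddSubgroup.closure J, ∀ y : R, y ⊔ -y ≤ x ⊔ -x →
      y ∈ AddSubgroup.closure J) ∧
    (∀ r : R, ∀ x ∈ AddSubgroup.closure J, r * x ∈ AddSubgroup.closure J) :=
  mv_ideal_generates_L_ideal_general mul_nonneg' u strong semilow J hJ hdown
end

section
/- In a semi-low l_u-ring (R, u), every l-ideal is an L-ideal: if J is an additive subgroup of R such that x ∈ J and |y| ≤ |x| imply y ∈ J, then J is closed under multiplication by arbitrary elements of R, i.e. r ∈ R and x ∈ J imply r·x ∈ J. -/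
/-!
Writing `r = r⁺ - r⁻`, positivity of products gives `|r x| ≤ |r| |x| ≤ n • (u |x|)` once
`|r| ≤ n • u`. Semi-lowness forces `u y ≤ y` for every `0 ≤ y ≤ m • u`: peel off `y ⊓ u`, on which
`u` acts below the identity, and induct on `m`. So `u |x| ≤ |x|` lies in `J`, hence so do
`n • (u |x|)` and, by solidity, `r x`.
-/

section LatticeOrderedRing

variable {R : Type*} [Ring R] [Lattice R] [AddLeftMono R]

theorem mul_le_mul_of_nonneg_right_of_mul_nonneg
    (mul_nonneg' : ∀ x y : R, 0 ≤ x → 0 ≤ y → 0 ≤ x * y) {a b c : R} (hab : a ≤ b)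
    (hc : 0 ≤ c) : a * c ≤ b * c := by
  have h := mul_nonneg' _ _ (sub_nonneg.mpr hab) hc
  rwa [sub_mul, sub_nonneg] at h

theorem abs_mul_le_abs_mul_abs_s14 (mul_nonneg' : ∀ x y : R, 0 ≤ x → 0 ≤ y → 0 ≤ x * y)
    (a b : R) : |a * b| ≤ |a| * |b| := by
  have hpp := mul_nonneg' _ _ (posPart_nonneg a) (posPart_nonneg b)
  have hpn := mul_nonneg' _ _ (posPart_nonneg a) (negPart_nonneg b)
  have hnp := mul_nonneg' _ _ (negPart_nonneg a) (posPart_nonneg b)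
  have hnn := mul_nonneg' _ _ (negPart_nonneg a) (negPart_nonneg b)
  rw [← posPart_add_negPart a, ← posPart_add_negPart b]
  conv_lhs => rw [← posPart_sub_negPart a, ← posPart_sub_negPart b]
  refine abs_le'.mpr ⟨?_, ?_⟩
  · rw [← sub_nonneg]
    convert add_nonneg (add_nonneg hpn hpn) (add_nonneg hnp hnp) using 1
    noncomm_ring
  · rw [← sub_nonneg]
    convert add_nonneg (add_nonneg hpp hpp) (add_nonneg hnn hnn) using 1
    noncomm_ring

theorem mul_le_self_of_le_nsmul {u : R} (hu : 0 ≤ u) (hlow : ∀ b ∈ Set.Icc 0 u, u * b ≤ b)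
    (n : ℕ) {y : R} (hy : 0 ≤ y) (hyn : y ≤ n • u) : u * y ≤ y := by
  induction n generalizing y with
  | zero => simp [le_antisymm (by simpa using hyn) hy]
  | succ n ih =>
    have hrest : y - y ⊓ u = 0 ⊔ (y - u) := by rw [sub_inf, sub_self]
    have hrest_nonneg : 0 ≤ y - y ⊓ u := hrest ▸ le_sup_left
    have hrest_le : y - y ⊓ u ≤ n • u := by
      rw [hrest]
      exact sup_le (nsmul_nonneg hu n) (sub_le_iff_le_add.mpr (succ_nsmul u n ▸ hyn))
    calc u * y = u * (y ⊓ u) + u * (y - y ⊓ u) := by rw [← mul_add, add_sub_cancel]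
      _ ≤ y ⊓ u + (y - y ⊓ u) :=
        add_le_add (hlow _ ⟨le_inf hy hu, inf_le_right⟩) (ih hrest_nonneg hrest_le)
      _ = y := add_sub_cancel _ _

end LatticeOrderedRing

/-- In a semi-low `l_u`-ring `(R, u)`, every `l`-ideal is an
`L`-ideal: if `J` is an additive subgroup of `R` such that `x ∈ J` and `|y| ≤ |x|`
imply `y ∈ J` (with `|x| = x ⊔ -x`), then `J` absorbs multiplication by arbitrary
elements of `R`. -/
theorem l_ideal_is_L_ideal {R : Type*} [CommRing R] [Lattice R]
    [CovariantClass R R (· + ·) (· ≤ ·)]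
    (mul_nonneg' : ∀ x y : R, 0 ≤ x → 0 ≤ y → 0 ≤ x * y)
    (u : R) (hu : 0 < u)
    (strong : ∀ x : R, ∃ n : ℕ, x ⊔ -x ≤ n • u)
    (semilow : ∀ a b : R, a ∈ Set.Icc (0 : R) u → b ∈ Set.Icc (0 : R) u →
      a * b ≤ a ⊓ b)
    (J : AddSubgroup R)
    (hconv : ∀ x ∈ J, ∀ y : R, y ⊔ -y ≤ x ⊔ -x → y ∈ J) :
    ∀ r : R, ∀ x ∈ J, r * x ∈ J := by
  intro r x hx
  obtain ⟨n, hr⟩ := strong r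
  obtain ⟨m, hxm⟩ := strong x
  have hux_nonneg : 0 ≤ u * |x| := mul_nonneg' _ _ hu.le (abs_nonneg x)
  have hux_le : u * |x| ≤ |x| :=
    mul_le_self_of_le_nsmul hu.le
      (fun b hb ↦ (semilow u b ⟨hu.le, le_rfl⟩ hb).trans inf_le_right) m (abs_nonneg x) hxm
  have hux_mem : u * |x| ∈ J := hconv x hx _ ((abs_of_nonneg hux_nonneg).trans_le hux_le)
  refine hconv _ (J.nsmul_mem hux_mem n) _ ?_
  calc |r * x| ≤ |r| * |x| := abs_mul_le_abs_mul_abs_s14 mul_nonneg' r x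
    _ ≤ (n • u) * |x| := mul_le_mul_of_nonneg_right_of_mul_nonneg mul_nonneg' hr (abs_nonneg x)
    _ = n • (u * |x|) := smul_mul_assoc n u |x|
    _ ≤ |n • (u * |x|)| := le_abs_self _
end

section
/- Let (R, u) be a semi-low l_u-ring. Then for all x, y, z ∈ [0, u]: x·((y − z) ⊔ 0) = (x·y − x·z) ⊔ 0. Consequently, Γ(R, u) = [0, u] with the operations x ⊕ y = (x + y) ⊓ u, ¬x = u − x and the restricted ring product is a PMV_f-algebra (in the MV-algebra Γ(R, u) one has y ⊖ z = (y − z) ⊔ 0, so the identity asserts x·(y ⊖ z) = x·y ⊖ x·z, and x·y ≤ x ∧ y holds by semi-lowness). -/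
/-!
Split `y - z = p - q` into its positive and negative parts `p = (y - z)⁺`, `q = (y - z)⁻`,
which are disjoint (`p ⊓ q = 0`) and lie in `[0, u]`. Semi-lowness makes multiplication by `x`
map every `a ∈ [0, u]` into `[0, a]`, so `x p` and `x q` are still disjoint; a difference of
disjoint positive elements has the first one as its positive part, whence
`x p = (x p - x q)⁺ = (x y - x z)⁺`. Subdistributivity is monotonicity of `x * ·` plus
`x s ≤ s ≤ u` for `s = (y + z) ⊓ u`.
-/

open Set

theorem negPart_sub_eq_posPart_sub {α : Type*} [Lattice α] [AddGroup α] (a b : α) :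
    (a - b)⁻ = (b - a)⁺ := by
  rw [← posPart_neg, neg_sub]

section LatticeOrderedGroup

variable {α : Type*} [Lattice α] [AddCommGroup α] [AddLeftMono α]

theorem posPart_sub_of_inf_eq_zero {a b : α} (h : a ⊓ b = 0) : (a - b)⁺ = a := by
  have hsum : b + (a - b)⁺ = b + a := by
    rw [← sup_eq_add_posPart_sub, ← zero_add (a ⊔ b), ← h, inf_add_sup, add_comm]
  exact add_left_cancel hsum

theorem posPart_sub_le_left {a b : α} (ha : 0 ≤ a) (hb : 0 ≤ b) : (a - b)⁺ ≤ a :=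
  sup_le (sub_le_self a hb) ha

theorem map_posPart_of_mem_Icc {f : α →+ α} {a : α} (hpos : f a⁺ ∈ Icc 0 a⁺)
    (hneg : f a⁻ ∈ Icc 0 a⁻) : f a⁺ = (f a)⁺ := by
  have hdisj : f a⁺ ⊓ f a⁻ = 0 :=
    le_antisymm ((inf_le_inf hpos.2 hneg.2).trans (posPart_inf_negPart_eq_zero a).le)
      (le_inf hpos.1 hneg.1)
  rw [← posPart_sub_of_inf_eq_zero hdisj, ← map_sub, posPart_sub_negPart]

theorem posPart_sub_mem_Icc {u a b : α} (ha : a ∈ Icc 0 u) (hb : 0 ≤ b) : (a - b)⁺ ∈ Icc 0 u :=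
  ⟨posPart_nonneg _, (posPart_sub_le_left ha.1 hb).trans ha.2⟩

end LatticeOrderedGroup

theorem mul_mem_Icc_self_of_semilow {R : Type*} [Mul R] [Zero R] [Lattice R] {u x : R}
    (hmul : ∀ a b : R, 0 ≤ a → 0 ≤ b → 0 ≤ a * b)
    (semilow : ∀ a b : R, a ∈ Icc 0 u → b ∈ Icc 0 u → a * b ≤ a ⊓ b)
    (hx : x ∈ Icc 0 u) {a : R} (ha : a ∈ Icc 0 u) : x * a ∈ Icc 0 a :=
  ⟨hmul x a hx.1 ha.1, (semilow x a hx ha).trans inf_le_right⟩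

section SemiLow

variable {R : Type*} [CommRing R] [Lattice R] [AddLeftMono R] {u x : R}

theorem mul_posPart_sub_of_semilow (hmul : ∀ a b : R, 0 ≤ a → 0 ≤ b → 0 ≤ a * b)
    (semilow : ∀ a b : R, a ∈ Icc 0 u → b ∈ Icc 0 u → a * b ≤ a ⊓ b)
    (hx : x ∈ Icc 0 u) {y z : R} (hy : y ∈ Icc 0 u) (hz : z ∈ Icc 0 u) :
    x * (y - z)⁺ = (x * y - x * z)⁺ := by
  have hneg : (y - z)⁻ ∈ Icc 0 u := by
    rw [negPart_sub_eq_posPart_sub]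
    exact posPart_sub_mem_Icc hz hy.1
  rw [← mul_sub]
  exact map_posPart_of_mem_Icc (f := AddMonoidHom.mulLeft x)
    (mul_mem_Icc_self_of_semilow hmul semilow hx (posPart_sub_mem_Icc hy hz.1))
    (mul_mem_Icc_self_of_semilow hmul semilow hx hneg)

theorem mul_add_inf_le_of_semilow (hmul : ∀ a b : R, 0 ≤ a → 0 ≤ b → 0 ≤ a * b)
    (semilow : ∀ a b : R, a ∈ Icc 0 u → b ∈ Icc 0 u → a * b ≤ a ⊓ b)
    (hx : x ∈ Icc 0 u) {y z : R} (hy : 0 ≤ y) (hz : 0 ≤ z) :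
    x * ((y + z) ⊓ u) ≤ (x * y + x * z) ⊓ u := by
  have hs : (y + z) ⊓ u ∈ Icc 0 u :=
    ⟨le_inf (add_nonneg hy hz) (hx.1.trans hx.2), inf_le_right⟩
  have hle_add : x * ((y + z) ⊓ u) ≤ x * y + x * z := by
    rw [← mul_add, ← sub_nonneg, ← mul_sub]
    exact hmul x _ hx.1 (sub_nonneg.mpr inf_le_left)
  exact le_inf hle_add ((mul_mem_Icc_self_of_semilow hmul semilow hx hs).2.trans hs.2)

end SemiLow

theorem gamma_semilow_is_pmvf_general {R : Type*} [CommRing R] [Lattice R]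
    [CovariantClass R R (· + ·) (· ≤ ·)]
    (mul_nonneg' : ∀ x y : R, 0 ≤ x → 0 ≤ y → 0 ≤ x * y)
    (u : R)
    (semilow : ∀ a b : R, a ∈ Set.Icc (0 : R) u → b ∈ Set.Icc (0 : R) u →
      a * b ≤ a ⊓ b) :
    ∀ x ∈ Set.Icc (0 : R) u, ∀ y ∈ Set.Icc (0 : R) u, ∀ z ∈ Set.Icc (0 : R) u,
      x * ((y - z) ⊔ 0) = (x * y - x * z) ⊔ 0 ∧
      x * ((y + z) ⊓ u) ≤ (x * y + x * z) ⊓ u :=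
  fun _ hx _ hy _ hz =>
    ⟨mul_posPart_sub_of_semilow mul_nonneg' semilow hx hy hz,
      mul_add_inf_le_of_semilow mul_nonneg' semilow hx hy.1 hz.1⟩

/-- Let `(R, u)` be a semi-low `l_u`-ring. Then for all
`x, y, z ∈ [0, u]` one has `x·((y - z) ⊔ 0) = (x·y - x·z) ⊔ 0`, i.e. in the
MV-algebra `Γ(R, u)` the product satisfies `x·(y ⊖ z) = x·y ⊖ x·z`; together with
the subdistributivity `x·((y + z) ⊓ u) ≤ (x·y + x·z) ⊓ u` (that is,
`x·(y ⊕ z) ≤ x·y ⊕ x·z`) and semi-lowness `x·y ≤ x ⊓ y`, this makes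
`Γ(R, u)` a `PMV_f`-algebra. -/
theorem gamma_semilow_is_pmvf {R : Type*} [CommRing R] [Lattice R]
    [CovariantClass R R (· + ·) (· ≤ ·)]
    (mul_nonneg' : ∀ x y : R, 0 ≤ x → 0 ≤ y → 0 ≤ x * y)
    (u : R) (hu : 0 < u)
    (strong : ∀ x : R, ∃ n : ℕ, x ⊔ -x ≤ n • u)
    (semilow : ∀ a b : R, a ∈ Set.Icc (0 : R) u → b ∈ Set.Icc (0 : R) u →
      a * b ≤ a ⊓ b) :
    ∀ x ∈ Set.Icc (0 : R) u, ∀ y ∈ Set.Icc (0 : R) u, ∀ z ∈ Set.Icc (0 : R) u,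
      x * ((y - z) ⊔ 0) = (x * y - x * z) ⊔ 0 ∧
      x * ((y + z) ⊓ u) ≤ (x * y + x * z) ⊓ u :=
  gamma_semilow_is_pmvf_general mul_nonneg' u semilow
end

section
/- The inclusion of unitary PMV-algebras (PMV_1) in PMV_f-algebras is strict: for a real number u with 0 < u < 1 (e.g. u = 1/2), the interval A = [0, u] ⊆ ℝ with operations x ⊕ y = min(x + y, u), ¬x = u − x, and the usual real multiplication is a PMV_f-algebra (the MV axioms hold, x·y ≤ min(x, y), and x·max(y − z, 0) = max(x·y − x·z, 0) for all x, y, z ∈ A), but it has no multiplicative unit: there is no s ∈ A with s·x = x for all x ∈ A. -/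
/-!
The segment `[0, u]` with truncated addition and `x ↦ u - x` is the standard Łukasiewicz chain
scaled by `u`. Multiplying by some `x ∈ [0, 1]` is monotone, contracting and commutes with `max`,
so the real product satisfies the `PMV_f` axioms on `[0, u]` as soon as `u ≤ 1`. A unit `s` would
satisfy `s * u = u` with `u ≠ 0`, forcing `s = 1`, which lies outside `[0, u]` when `u < 1`.
-/

section TruncatedAddition

variable {α : Type*} [AddCommGroup α] [LinearOrder α] [IsOrderedAddMonoid α]

theorem min_min_add_of_nonneg {a z : α} (u : α) (hz : 0 ≤ z) :
    min (min a u + z) u = min (a + z) u := by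
  rw [← min_add_add_right, min_assoc, min_eq_right (le_add_of_nonneg_right hz)]

theorem min_add_min_of_nonneg {x a : α} (u : α) (hx : 0 ≤ x) :
    min (x + min a u) u = min (x + a) u := by
  rw [add_comm, min_min_add_of_nonneg u hx, add_comm]

theorem min_add_mem_Icc {x y u : α} (hx : 0 ≤ x) (hy : 0 ≤ y) (hu : 0 ≤ u) :
    min (x + y) u ∈ Set.Icc 0 u :=
  ⟨le_min (add_nonneg hx hy) hu, min_le_right _ _⟩

theorem sub_mem_Icc_zero {x u : α} (hx : x ∈ Set.Icc 0 u) : u - x ∈ Set.Icc 0 u :=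
  ⟨sub_nonneg.2 hx.2, sub_le_self u hx.1⟩

/-- In MV notation: `¬(¬x ⊕ y) ⊕ y = x ∨ y`. -/
theorem min_sub_min_sub_add_eq_max {x y u : α} (hx : x ≤ u) (hy : y ≤ u) :
    min ((u - min ((u - x) + y) u) + y) u = max x y := by
  rcases le_total x y with hxy | hyx
  · have : u ≤ u - x + y := by rw [sub_add_eq_add_sub, le_sub_iff_add_le]; gcongr
    rw [min_eq_right this, sub_self, zero_add, min_eq_left hy, max_eq_right hxy]
  · have : u - x + y ≤ u := by rw [sub_add_eq_add_sub, sub_le_iff_le_add]; gcongr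
    rw [min_eq_left this, show u - (u - x + y) + y = x by abel,
      min_eq_left hx, max_eq_left hyx]

end TruncatedAddition

section Product

variable {R : Type*} [Ring R] [LinearOrder R] [IsStrictOrderedRing R]

theorem mul_mem_Icc_zero {x y u : R} (hu : u ≤ 1) (hx : x ∈ Set.Icc 0 u)
    (hy : y ∈ Set.Icc 0 u) : x * y ∈ Set.Icc 0 u :=
  ⟨mul_nonneg hx.1 hy.1, (mul_le_of_le_one_right hx.1 (hy.2.trans hu)).trans hx.2⟩

theorem mul_le_min_of_le_one {x y : R} (hx0 : 0 ≤ x) (hx1 : x ≤ 1) (hy0 : 0 ≤ y) (hy1 : y ≤ 1) :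
    x * y ≤ min x y :=
  le_min (mul_le_of_le_one_right hx0 hy1) (mul_le_of_le_one_left hy0 hx1)

theorem mul_min_add_le {x u : R} (y z : R) (hx0 : 0 ≤ x) (hx1 : x ≤ 1) (hu : 0 ≤ u) :
    x * min (y + z) u ≤ min (x * y + x * z) u := by
  rw [mul_min_of_nonneg _ _ hx0, mul_add]
  exact min_le_min_left _ (mul_le_of_le_one_left hu hx1)

theorem mul_max_sub_zero {x : R} (y z : R) (hx : 0 ≤ x) :
    x * max (y - z) 0 = max (x * y - x * z) 0 := by
  rw [mul_max_of_nonneg _ _ hx, mul_sub, mul_zero]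

theorem not_exists_mul_unit_Icc {u : R} (hu0 : 0 < u) (hu1 : u < 1) :
    ¬ ∃ s ∈ Set.Icc 0 u, ∀ x ∈ Set.Icc 0 u, s * x = x := by
  rintro ⟨s, hs, hunit⟩
  have hs1 : s = 1 := (mul_eq_right₀ hu0.ne').1 (hunit u ⟨hu0.le, le_rfl⟩)
  exact absurd (hs1 ▸ hs.2) hu1.not_ge

end Product

/-- The inclusion `PMV_1 ⊂ PMV_f` is strict: for a real `u` with
`0 < u < 1`, the segment `A = [0, u] ⊆ ℝ` with `x ⊕ y = min (x + y) u`,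
`¬x = u - x` and the usual real multiplication is a `PMV_f`-algebra (the MV axioms
hold, the product is well defined on `A`, `x·0 = 0`, `x·(y ⊕ z) ≤ x·y ⊕ x·z`,
`x·y ≤ min x y`, and `x·max (y - z) 0 = max (x·y - x·z) 0`), but it has no
multiplicative unit: there is no `s ∈ A` with `s·x = x` for all `x ∈ A`. -/
theorem segment_pmvf_not_unitary (u : ℝ) (hu0 : 0 < u) (hu1 : u < 1) :
    -- the product and the MV operations are well defined on `A = [0, u]`
    (∀ x ∈ Set.Icc (0 : ℝ) u, ∀ y ∈ Set.Icc (0 : ℝ) u,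
      x * y ∈ Set.Icc (0 : ℝ) u) ∧
    (∀ x ∈ Set.Icc (0 : ℝ) u, ∀ y ∈ Set.Icc (0 : ℝ) u,
      min (x + y) u ∈ Set.Icc (0 : ℝ) u) ∧
    (∀ x ∈ Set.Icc (0 : ℝ) u, u - x ∈ Set.Icc (0 : ℝ) u) ∧
    -- `(A, ⊕, 0)` is a commutative monoid
    (∀ x ∈ Set.Icc (0 : ℝ) u, ∀ y ∈ Set.Icc (0 : ℝ) u, ∀ z ∈ Set.Icc (0 : ℝ) u,
      min (min (x + y) u + z) u = min (x + min (y + z) u) u) ∧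
    (∀ x y : ℝ, min (x + y) u = min (y + x) u) ∧
    (∀ x ∈ Set.Icc (0 : ℝ) u, min (x + 0) u = x) ∧
    -- the MV axioms for the negation `¬x = u - x`
    (∀ x ∈ Set.Icc (0 : ℝ) u, u - (u - x) = x) ∧
    (∀ x ∈ Set.Icc (0 : ℝ) u, min (x + (u - 0)) u = u - 0) ∧
    (∀ x ∈ Set.Icc (0 : ℝ) u, ∀ y ∈ Set.Icc (0 : ℝ) u,
      min ((u - min ((u - x) + y) u) + y) u = min ((u - min ((u - y) + x) u) + x) u) ∧
    -- the `PMV_f` axioms for the usual real product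
    (∀ x ∈ Set.Icc (0 : ℝ) u, x * 0 = 0) ∧
    (∀ x ∈ Set.Icc (0 : ℝ) u, ∀ y ∈ Set.Icc (0 : ℝ) u, ∀ z ∈ Set.Icc (0 : ℝ) u,
      x * min (y + z) u ≤ min (x * y + x * z) u) ∧
    (∀ x ∈ Set.Icc (0 : ℝ) u, ∀ y ∈ Set.Icc (0 : ℝ) u, x * y ≤ min x y) ∧
    (∀ x ∈ Set.Icc (0 : ℝ) u, ∀ y ∈ Set.Icc (0 : ℝ) u, ∀ z ∈ Set.Icc (0 : ℝ) u,
      x * max (y - z) 0 = max (x * y - x * z) 0) ∧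
    -- but there is no multiplicative unit
    ¬ ∃ s ∈ Set.Icc (0 : ℝ) u, ∀ x ∈ Set.Icc (0 : ℝ) u, s * x = x := by
  have hle_one : ∀ x ∈ Set.Icc (0 : ℝ) u, x ≤ 1 := fun x hx => hx.2.trans hu1.le
  refine ⟨fun x hx y hy => mul_mem_Icc_zero hu1.le hx hy,
    fun x hx y hy => min_add_mem_Icc hx.1 hy.1 hu0.le,
    fun x hx => sub_mem_Icc_zero hx, ?_, fun x y => by rw [add_comm],
    fun x hx => by rw [add_zero, min_eq_left hx.2], fun x _ => sub_sub_cancel u x,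
    fun x hx => by rw [sub_zero, min_eq_right (le_add_of_nonneg_left hx.1)], ?_,
    fun x _ => mul_zero x,
    fun x hx y _ z _ => mul_min_add_le y z hx.1 (hle_one x hx) hu0.le,
    fun x hx y hy => mul_le_min_of_le_one hx.1 (hle_one x hx) hy.1 (hle_one y hy),
    fun x hx y _ z _ => mul_max_sub_zero y z hx.1, not_exists_mul_unit_Icc hu0 hu1⟩
  · intro x hx y _ z hz
    rw [min_min_add_of_nonneg u hz.1, min_add_min_of_nonneg u hx.1, add_assoc]
  · intro x hx y hy
    rw [min_sub_min_sub_add_eq_max hx.2 hy.2, min_sub_min_sub_add_eq_max hy.2 hx.2, max_comm]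
end
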